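/- Let n ≥ 3, m ≥ 0 and d ≥ 1 be integers. The number of labelled graphs on the vertex set {1, 2, …, n} with exactly m edges and degenerate distance-number at most d is at most (e·n·d/2)^{2n+d} · C(ex(n,d), m), where e is the base of the natural logarithm, C(a,b) denotes the binomial coefficient, and ex(n,d) is the maximum number of edges in an n-vertex graph whose degenerate distance-number is at most d. -/

import Mathlib

noncomputable section

/-- The Euclidean plane. -/
abbrev Plane : Type := EuclideanSpace ℝ (Fin 2)

/-- The set of edge-lengths determined by a map `f` of the vertices of `G` to the plane. -/
def SimpleGraph.edgeLengths {V : Type*} (G : SimpleGraph V) (f : V → Plane) : Set ℝ :=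
  {d : ℝ | ∃ u v : V, G.Adj u v ∧ Dist.dist (f u) (f v) = d}

/-- A degenerate drawing of `G`: an injective map from the vertices to the plane. -/
def SimpleGraph.IsDegenDrawing {V : Type*} (_G : SimpleGraph V) (f : V → Plane) : Prop :=
  Function.Injective f

/-- A drawing of `G`: a degenerate drawing such that no vertex lies on the open segment
representing an edge. -/
def SimpleGraph.IsDrawing {V : Type*} (G : SimpleGraph V) (f : V → Plane) : Prop :=
  Function.Injective f ∧ ∀ u v w : V, G.Adj u v → f w ∉ openSegment ℝ (f u) (f v)

/-- The degenerate distance-number of `G`: the minimum number of distinct edge-lengths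
in a degenerate drawing of `G`. -/
def SimpleGraph.ddn {V : Type*} (G : SimpleGraph V) : ℕ :=
  sInf {k : ℕ | ∃ f : V → Plane, G.IsDegenDrawing f ∧ (G.edgeLengths f).ncard = k}

/-- The distance-number of `G`: the minimum number of distinct edge-lengths
in a drawing of `G`. -/
def SimpleGraph.dn {V : Type*} (G : SimpleGraph V) : ℕ :=
  sInf {k : ℕ | ∃ f : V → Plane, G.IsDrawing f ∧ (G.edgeLengths f).ncard = k}

/-- `ex n d`: the maximum number of edges in an `n`-vertex graph whose degenerate
distance-number is at most `d`. -/
def distEx (n d : ℕ) : ℕ :=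
  sSup {m : ℕ | ∃ G : SimpleGraph (Fin n), G.ddn ≤ d ∧ G.edgeSet.ncard = m}

/-!
A graph with `ddn G ≤ d` is a subgraph of the graph of all pairs `uv` with
`‖x_u - x_v‖ ∈ {|t_1|, …, |t_d|}`, for some injective `x : V → ℝ²` and `t ∈ ℝ^d`. That graph
again has `ddn ≤ d`, hence at most `ex(n, d)` edges, and it only depends on which of the
`C(n, 2) d` quadratic polynomials `‖x_u - x_v‖² - t_i²` in `2n + d` variables vanish at `(x, t)`.
By the Rónyai–Babai–Ganapathy argument, `N` polynomials of degree `≤ D` in `k` variables have at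
most `C(ND + k, k)` zero patterns: for the realised patterns `P`, the products `∏_{a ∉ P} F_a`
are linearly independent (evaluate at points realising the patterns, ordered by size) and have
degree `≤ ND`. Hence at most `C(n(n-1)d + 2n + d, 2n + d)` graphs cover all graphs counted, each
contains at most `C(ex(n, d), m)` of them, and Stirling's formula bounds the binomial coefficient
by `(e n d / 2)^(2n + d)`.
-/

theorem Finsupp.natCard_setOf_sum_le_le_choose (σ : Type*) [Fintype σ] (N : ℕ) :
    Nat.card {s : σ →₀ ℕ | (s.sum fun _ e => e) ≤ N} ≤
      (N + Fintype.card σ).choose (Fintype.card σ) := by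
  classical
  let extend : (σ →₀ ℕ) → Option σ →₀ ℕ := fun s => s.optionElim (N - s.sum fun _ e => e)
  have hmaps : ∀ s ∈ {s : σ →₀ ℕ | (s.sum fun _ e => e) ≤ N},
      extend s ∈ (Finset.univ : Finset (Option σ)).finsuppAntidiag N := by
    intro s hs
    rw [Set.mem_ofPred_eq] at hs
    have hsum : (s.sum fun _ e => e) = ∑ i, s i := Finsupp.sum_fintype _ _ fun _ => rfl
    simp only [extend, Finset.mem_finsuppAntidiag, Fintype.sum_option, optionElim_apply_none,
      optionElim_apply_some, Finset.subset_univ, and_true, hsum] at hs ⊢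
    omega
  calc Nat.card {s : σ →₀ ℕ | (s.sum fun _ e => e) ≤ N}
      ≤ ((Finset.univ : Finset (Option σ)).finsuppAntidiag N).card := by
        rw [Nat.card_coe_set_eq, ← Set.ncard_coe_finset]
        refine Set.ncard_le_ncard_of_injOn extend hmaps fun s _ s' _ h => ?_
        simpa [extend] using congrArg Finsupp.some h
    _ = (N + Fintype.card σ).choose (Fintype.card σ) := by
        rw [Finset.card_finsuppAntidiag_nat_eq_choose, Finset.card_univ, Fintype.card_option,
          Nat.add_right_comm, Nat.add_sub_cancel, add_comm, Nat.choose_symm_add]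

theorem LinearIndependent.of_dual_triangular {K M ι β : Type*} [Field K] [AddCommGroup M]
    [Module K M] [LinearOrder β] {v : ι → M} (φ : ι → Module.Dual K M) (r : ι → β)
    (hdiag : ∀ i, φ i (v i) ≠ 0) (htri : ∀ i j, i ≠ j → φ i (v j) ≠ 0 → r i < r j) :
    LinearIndependent K v := by
  classical
  rw [linearIndependent_iff']
  intro s c hsum i hi
  by_contra hci
  obtain ⟨i₀, hi₀, hmax⟩ := (s.filter (c · ≠ 0)).exists_max_image r ⟨i, by simp [hi, hci]⟩
  rw [Finset.mem_filter] at hi₀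
  have hφ := congrArg (φ i₀) hsum
  rw [map_sum, map_zero, Finset.sum_eq_single i₀] at hφ
  · simp only [map_smul, smul_eq_mul, mul_eq_zero] at hφ
    exact hφ.elim hi₀.2 (hdiag i₀)
  · intro j hj hji₀
    by_cases hcj : c j = 0
    · simp [hcj]
    rw [map_smul, smul_eq_mul, mul_eq_zero, or_iff_right hcj]
    by_contra h
    exact (htri i₀ j (Ne.symm hji₀) h).not_ge (hmax j (by simp [hj, hcj]))
  · exact fun h => absurd hi₀.1 h

namespace MvPolynomial

theorem finrank_restrictTotalDegree_le (σ R : Type*) [Fintype σ] [CommRing R] [Nontrivial R]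
    (N : ℕ) :
    Module.finrank R (restrictTotalDegree σ R N) ≤
      (N + Fintype.card σ).choose (Fintype.card σ) := by
  rw [restrictTotalDegree, Module.finrank_eq_nat_card_basis (basisRestrictSupport R _)]
  exact Finsupp.natCard_setOf_sum_le_le_choose σ N

theorem ncard_range_zeroPattern_le {σ α K : Type*} [Fintype σ] [Fintype α] [Field K]
    (F : α → MvPolynomial σ K) (D : ℕ) (hF : ∀ a, (F a).totalDegree ≤ D) :
    (Set.range fun x : σ → K => {a | eval x (F a) = 0}).ncard ≤
      (Fintype.card α * D + Fintype.card σ).choose (Fintype.card σ) := by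
  classical
  set R := Set.range fun x : σ → K => {a | eval x (F a) = 0}
  choose x hx using fun P : R => P.2
  let g : R → restrictTotalDegree σ K (Fintype.card α * D) := fun P =>
    ⟨∏ a ∈ Finset.univ.filter (· ∉ (P : Set α)), F a, by
      rw [mem_restrictTotalDegree]
      refine (totalDegree_finsetProd _ _).trans ?_
      calc _ ≤ ∑ _a ∈ Finset.univ.filter (· ∉ (P : Set α)), D :=
            Finset.sum_le_sum fun a _ => hF a
        _ ≤ ∑ _a : α, D := Finset.sum_le_sum_of_subset (Finset.filter_subset _ _)
        _ = Fintype.card α * D := by simp⟩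
  let φ : R → Module.Dual K (restrictTotalDegree σ K (Fintype.card α * D)) := fun Q =>
    (aeval (x Q)).toLinearMap ∘ₗ Submodule.subtype _
  have hφ : ∀ P Q : R, φ Q (g P) ≠ 0 ↔ (Q : Set α) ⊆ P := by
    intro P Q
    simp only [φ, g, LinearMap.comp_apply, Submodule.subtype_apply, AlgHom.toLinearMap_apply,
      map_prod, Finset.prod_ne_zero_iff, Finset.mem_filter, Finset.mem_univ, true_and]
    rw [← hx Q]
    exact ⟨fun h a ha => not_not.mp fun haP => h a haP ha, fun h a haP ha => haP (h ha)⟩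
  have hli : LinearIndependent K g :=
    LinearIndependent.of_dual_triangular φ (fun P => (P : Set α).ncard)
      (fun P => (hφ P P).2 le_rfl)
      (fun Q P hQP h => Set.ncard_lt_ncard
        (ssubset_of_subset_of_ne ((hφ P Q).1 h) fun h' => hQP (Subtype.ext h')))
  have := Fintype.ofFinite R
  calc R.ncard = Fintype.card R := by rw [← Nat.card_coe_set_eq, Nat.card_eq_fintype_card]
    _ ≤ _ := hli.fintype_card_le_finrank
    _ ≤ _ := finrank_restrictTotalDegree_le σ K _

end MvPolynomial

section Numerics

open Real Nat

theorem Nat.choose_mul_sqrt_le (M k : ℕ) (hk : k ≠ 0) :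
    (M.choose k : ℝ) * √(2 * π * k) ≤ (exp 1 * M / k) ^ k := by
  have hpow : 0 < ((k : ℝ) / exp 1) ^ k := by positivity
  have hM : (exp 1 * M / k) ^ k * ((k : ℝ) / exp 1) ^ k = (M : ℝ) ^ k := by
    rw [← mul_pow]; congr 1; field_simp
  rw [← mul_le_mul_iff_left₀ hpow, hM, mul_assoc]
  calc (M.choose k : ℝ) * (√(2 * π * k) * ((k : ℝ) / exp 1) ^ k)
      ≤ (M : ℝ) ^ k / k ! * k ! := by
        gcongr
        · exact choose_le_pow_div k M
        · exact Stirling.le_factorial_stirling k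
    _ = (M : ℝ) ^ k := div_mul_cancel₀ _ (by positivity)

theorem exp_five_thirds_le_sqrt_fourteen_mul_pi : exp (5 / 3) ≤ √(14 * π) := by
  have h10 : exp (10 / 3) ^ 3 < 42 ^ 3 := by
    rw [← exp_nat_mul, show ((3 : ℕ) : ℝ) * (10 / 3) = ((10 : ℕ) : ℝ) * 1 by norm_num,
      exp_nat_mul]
    calc exp 1 ^ 10 < 2.7182818286 ^ 10 := by gcongr; exact exp_one_lt_d9
      _ < 42 ^ 3 := by norm_num
  have h42 : exp (10 / 3) < 42 := lt_of_pow_lt_pow_left₀ 3 (by norm_num) h10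
  rw [le_sqrt (exp_pos _).le (by positivity), ← exp_nat_mul]
  norm_num
  nlinarith [pi_gt_three]

/-- The case `d = 1` of the next lemma: with `k = 2n + 1`, the base `n² + n + 1` exceeds `k n / 2`
by the factor `1 + (n + 2) / (n k)`, whose `k`-th power is at most `e ^ (5 / 3) ≤ √(14π)`. -/
theorem pow_le_sqrt_two_pi_mul_pow_of_three_le (n : ℕ) (hn : 3 ≤ n) :
    ((n : ℝ) ^ 2 + n + 1) ^ (2 * n + 1) ≤
      √(2 * π * (2 * n + 1)) * ((2 * n + 1) * n / 2) ^ (2 * n + 1) := by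
  have hnR : (3 : ℝ) ≤ n := by exact_mod_cast hn
  set y : ℝ := (n + 2) / (n * (2 * n + 1))
  have hy : (n : ℝ) ^ 2 + n + 1 = (2 * n + 1) * n / 2 * (1 + y) := by
    simp only [y]; field_simp; ring
  have hky : ((2 * n + 1 : ℕ) : ℝ) * y ≤ 5 / 3 := by
    rw [show ((2 * n + 1 : ℕ) : ℝ) * y = (n + 2) / n by simp only [y]; push_cast; field_simp,
      div_le_iff₀ (by positivity)]
    linarith
  have hexp : (1 + y) ^ (2 * n + 1) ≤ exp (5 / 3) := calc
    (1 + y) ^ (2 * n + 1) ≤ exp y ^ (2 * n + 1) := by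
      gcongr
      linarith [add_one_le_exp y]
    _ = exp ((2 * n + 1 : ℕ) * y) := (exp_nat_mul y _).symm
    _ ≤ exp (5 / 3) := exp_le_exp.2 hky
  have hsqrt : exp (5 / 3) ≤ √(2 * π * (2 * n + 1)) := by
    refine exp_five_thirds_le_sqrt_fourteen_mul_pi.trans (sqrt_le_sqrt ?_)
    nlinarith [pi_gt_three]
  rw [hy, mul_pow, mul_comm]
  gcongr
  exact hexp.trans hsqrt

theorem pow_le_sqrt_two_pi_mul_pow (n d : ℕ) (hn : 3 ≤ n) (hd : 1 ≤ d) :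
    ((n : ℝ) * (n - 1) * d + (2 * n + d)) ^ (2 * n + d) ≤
      √(2 * π * (2 * n + d)) * ((2 * n + d) * n * d / 2) ^ (2 * n + d) := by
  have hnR : (3 : ℝ) ≤ n := by exact_mod_cast hn
  rcases hd.eq_or_lt with rfl | hd2
  · convert pow_le_sqrt_two_pi_mul_pow_of_three_le n hn using 2 <;> push_cast <;> ring
  have hdR : (2 : ℝ) ≤ d := by exact_mod_cast hd2
  have hsqrt : 1 ≤ √(2 * π * (2 * n + d)) := by
    rw [one_le_sqrt]; nlinarith [pi_gt_three]
  calc ((n : ℝ) * (n - 1) * d + (2 * n + d)) ^ (2 * n + d)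
      ≤ ((2 * n + d) * n * d / 2) ^ (2 * n + d) := by
        gcongr
        · have : (0 : ℝ) ≤ n - 1 := by linarith
          positivity
        · nlinarith [mul_nonneg (sub_nonneg.2 hdR) (sub_nonneg.2 hnR)]
    _ ≤ _ := le_mul_of_one_le_left (by positivity) hsqrt

theorem choose_le_exp_mul_pow (n d : ℕ) (hn : 3 ≤ n) (hd : 1 ≤ d) :
    ((n * (n - 1) * d + (2 * n + d)).choose (2 * n + d) : ℝ) ≤
      (exp 1 * n * d / 2) ^ (2 * n + d) := by
  set k := 2 * n + d
  have hk : (k : ℝ) = 2 * n + d := by push_cast [k]; ring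
  have hM : ((n * (n - 1) * d + k : ℕ) : ℝ) = n * (n - 1) * d + (2 * n + d) := by
    push_cast [Nat.cast_sub (by omega : 1 ≤ n), hk]; ring
  refine le_of_mul_le_mul_right ?_ (by positivity : 0 < √(2 * π * k))
  calc _ ≤ (exp 1 * (n * (n - 1) * d + k : ℕ) / k) ^ k :=
        Nat.choose_mul_sqrt_le _ k (by omega)
    _ = (exp 1 / k) ^ k * ((n : ℝ) * (n - 1) * d + (2 * n + d)) ^ k := by
        rw [hM, ← mul_pow]; ring
    _ ≤ (exp 1 / k) ^ k * (√(2 * π * k) * (k * n * d / 2) ^ k) := by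
        rw [hk]; gcongr; exact pow_le_sqrt_two_pi_mul_pow n d hn hd
    _ = (exp 1 * n * d / 2) ^ k * √(2 * π * k) := by
        rw [mul_left_comm, ← mul_pow, mul_comm]
        congr 2
        have : (k : ℝ) ≠ 0 := by positivity
        field_simp

end Numerics

theorem Set.Finite.exists_subset_range_fin {α : Type*} [Inhabited α] {s : Set α} (hs : s.Finite)
    {d : ℕ} (hd : s.ncard ≤ d) : ∃ t : Fin d → α, s ⊆ Set.range t := by
  obtain ⟨k, e, rfl⟩ := hs.fin_embedding
  rw [Set.ncard_range_of_injective e.injective, Nat.card_eq_fintype_card, Fintype.card_fin] at hd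
  refine ⟨Function.extend (Fin.castLE hd) e default, ?_⟩
  rintro _ ⟨i, rfl⟩
  exact ⟨Fin.castLE hd i, (Fin.castLE_injective hd).extend_apply _ _ i⟩

namespace SimpleGraph

variable {V : Type*}

theorem edgeLengths_finite [Finite V] (G : SimpleGraph V) (f : V → Plane) :
    (G.edgeLengths f).Finite :=
  (Set.finite_range fun p : V × V => Dist.dist (f p.1) (f p.2)).subset
    fun _ ⟨u, v, _, h⟩ => ⟨(u, v), h⟩

theorem ddn_le_ncard_edgeLengths (G : SimpleGraph V) {f : V → Plane}
    (hf : Function.Injective f) : G.ddn ≤ (G.edgeLengths f).ncard :=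
  Nat.sInf_le ⟨f, hf, rfl⟩

theorem exists_injective_ncard_edgeLengths_eq_ddn [Countable V] (G : SimpleGraph V) :
    ∃ f : V → Plane, Function.Injective f ∧ (G.edgeLengths f).ncard = G.ddn := by
  obtain ⟨g, hg⟩ := Countable.exists_injective_nat V
  have hv : EuclideanSpace.single (0 : Fin 2) (1 : ℝ) ≠ 0 := by simp
  have hf : Function.Injective fun v => (g v : ℝ) • EuclideanSpace.single (0 : Fin 2) (1 : ℝ) :=
    (smul_left_injective ℝ hv).comp (Nat.cast_injective.comp hg)
  exact Nat.sInf_mem (⟨_, _, hf, rfl⟩ : Set.Nonempty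
    {k : ℕ | ∃ f : V → Plane, G.IsDegenDrawing f ∧ (G.edgeLengths f).ncard = k})

theorem ncard_edgeSet_le_distEx {n d : ℕ} (G : SimpleGraph (Fin n)) (hG : G.ddn ≤ d) :
    G.edgeSet.ncard ≤ distEx n d :=
  le_csSup ⟨Nat.card (Sym2 (Fin n)), by
    rintro _ ⟨H, -, rfl⟩
    exact Set.ncard_le_card _⟩ ⟨G, hG, rfl⟩

theorem ncard_setOf_le_and_ncard_edgeSet_eq_le_choose [Finite V] (H : SimpleGraph V) (m : ℕ) :
    {G : SimpleGraph V | G ≤ H ∧ G.edgeSet.ncard = m}.ncard ≤ H.edgeSet.ncard.choose m := by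
  classical
  have hfin : ∀ G : SimpleGraph V, G.edgeSet.Finite := fun G => Set.toFinite _
  rw [Set.ncard_eq_toFinset_card _ (hfin H), ← Finset.card_powersetCard, ← Set.ncard_coe_finset]
  refine Set.ncard_le_ncard_of_injOn (fun G => (hfin G).toFinset) ?_ ?_
  · rintro G ⟨hGH, hGm⟩
    simp only [Finset.mem_coe, Finset.mem_powersetCard, Set.Finite.toFinset_subset_toFinset]
    exact ⟨edgeSet_mono hGH, by rw [← Set.ncard_eq_toFinset_card _ (hfin G), hGm]⟩
  · intro G _ G' _ h
    simpa using h

theorem ncard_le_ncard_mul_choose {ι : Type*} [Finite V] {S : Set (SimpleGraph V)}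
    {I : Set ι} (hI : I.Finite) (H : ι → SimpleGraph V) {m N : ℕ}
    (hS : ∀ G ∈ S, G.edgeSet.ncard = m ∧ ∃ i ∈ I, G ≤ H i)
    (hH : ∀ i ∈ I, (H i).edgeSet.ncard ≤ N) : S.ncard ≤ I.ncard * N.choose m := by
  have hcover : S ⊆ ⋃ i ∈ hI.toFinset, {G | G ≤ H i ∧ G.edgeSet.ncard = m} := by
    intro G hG
    obtain ⟨hm, i, hi, hle⟩ := hS G hG
    exact Set.mem_biUnion (hI.mem_toFinset.2 hi) ⟨hle, hm⟩
  calc S.ncard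
      ≤ (⋃ i ∈ hI.toFinset, {G | G ≤ H i ∧ G.edgeSet.ncard = m}).ncard :=
        Set.ncard_le_ncard hcover (Set.toFinite _)
    _ ≤ ∑ i ∈ hI.toFinset, {G | G ≤ H i ∧ G.edgeSet.ncard = m}.ncard :=
        Finset.set_ncard_biUnion_le _ _
    _ ≤ hI.toFinset.card • N.choose m :=
        Finset.sum_le_card_nsmul _ _ _ fun i hi =>
          ((H i).ncard_setOf_le_and_ncard_edgeSet_eq_le_choose m).trans
            (Nat.choose_le_choose m (hH i (hI.mem_toFinset.1 hi)))
    _ = I.ncard * N.choose m := by rw [smul_eq_mul, Set.ncard_eq_toFinset_card I hI]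

end SimpleGraph

open MvPolynomial

section EdgeLengthEquations

variable {V : Type*} {d : ℕ}

def edgeLengthPoly (i : Fin d) : Sym2 V → MvPolynomial ((V × Fin 2) ⊕ Fin d) ℝ :=
  Sym2.lift ⟨fun u v => ∑ j, (X (Sum.inl (u, j)) - X (Sum.inl (v, j))) ^ 2 - X (Sum.inr i) ^ 2,
    fun u v => by simp only [sub_sq_comm (X (Sum.inl (u, _)))]⟩

def drawingPoint (f : V → Plane) (t : Fin d → ℝ) : (V × Fin 2) ⊕ Fin d → ℝ :=
  Sum.elim (fun p => f p.1 p.2) t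

def edgeLengthPattern (x : (V × Fin 2) ⊕ Fin d → ℝ) : Set ({e : Sym2 V // ¬e.IsDiag} × Fin d) :=
  {a | eval x (edgeLengthPoly a.2 a.1.1) = 0}

def patternGraph (P : Set ({e : Sym2 V // ¬e.IsDiag} × Fin d)) : SimpleGraph V :=
  SimpleGraph.fromEdgeSet ((fun a => a.1.1) '' P)

theorem totalDegree_edgeLengthPoly_le (i : Fin d) (e : Sym2 V) :
    (edgeLengthPoly i e).totalDegree ≤ 2 := by
  induction e using Sym2.ind with
  | _ u v =>
    refine IsHomogeneous.totalDegree_le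
      (.sub (.sum _ _ _ fun j _ => ?_) ((isHomogeneous_X _ _).pow 2))
    exact ((isHomogeneous_X _ _).sub (isHomogeneous_X _ _)).pow 2

theorem eval_edgeLengthPoly (f : V → Plane) (t : Fin d → ℝ) (i : Fin d) (u v : V) :
    eval (drawingPoint f t) (edgeLengthPoly i s(u, v)) = dist (f u) (f v) ^ 2 - t i ^ 2 := by
  rw [EuclideanSpace.dist_eq, Real.sq_sqrt (by positivity)]
  simp [edgeLengthPoly, drawingPoint, Real.dist_eq, sq_abs]

theorem patternGraph_edgeLengthPattern_adj {f : V → Plane} {t : Fin d → ℝ} {u v : V} :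
    (patternGraph (edgeLengthPattern (drawingPoint f t))).Adj u v ↔
      u ≠ v ∧ ∃ i, dist (f u) (f v) = |t i| := by
  simp only [patternGraph, SimpleGraph.fromEdgeSet_adj, Set.mem_image, edgeLengthPattern,
    Set.mem_ofPred_eq]
  constructor
  · rintro ⟨⟨⟨⟨e, he⟩, i⟩, h, rfl⟩, huv⟩
    rw [eval_edgeLengthPoly, sub_eq_zero, sq_eq_sq_iff_abs_eq_abs,
      abs_of_nonneg dist_nonneg] at h
    exact ⟨huv, i, h⟩
  · rintro ⟨huv, i, h⟩
    refine ⟨⟨(⟨s(u, v), by simpa using huv⟩, i), ?_, rfl⟩, huv⟩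
    rw [eval_edgeLengthPoly, h, sq_abs, sub_self]

theorem ddn_patternGraph_le {f : V → Plane} (hf : Function.Injective f) (t : Fin d → ℝ) :
    (patternGraph (edgeLengthPattern (drawingPoint f t))).ddn ≤ d := by
  have hsub : (patternGraph (edgeLengthPattern (drawingPoint f t))).edgeLengths f ⊆
      Set.range fun i => |t i| := by
    rintro _ ⟨u, v, huv, rfl⟩
    obtain ⟨-, i, hi⟩ := patternGraph_edgeLengthPattern_adj.1 huv
    exact ⟨i, hi.symm⟩
  calc _ ≤ _ := SimpleGraph.ddn_le_ncard_edgeLengths _ hf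
    _ ≤ (Set.range fun i => |t i|).ncard := Set.ncard_le_ncard hsub (Set.finite_range _)
    _ ≤ d := by
      rw [← Nat.card_coe_set_eq]
      simpa using Finite.card_range_le fun i => |t i|

theorem exists_le_patternGraph [Finite V] (G : SimpleGraph V) (hG : G.ddn ≤ d) :
    ∃ f : V → Plane, Function.Injective f ∧
      ∃ t : Fin d → ℝ, G ≤ patternGraph (edgeLengthPattern (drawingPoint f t)) := by
  obtain ⟨f, hf, hcard⟩ := G.exists_injective_ncard_edgeLengths_eq_ddn
  obtain ⟨t, ht⟩ := (G.edgeLengths_finite f).exists_subset_range_fin (hcard.trans_le hG)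
  refine ⟨f, hf, t, fun u v huv => patternGraph_edgeLengthPattern_adj.2 ⟨G.ne_of_adj huv, ?_⟩⟩
  obtain ⟨i, hi⟩ := ht ⟨u, v, huv, rfl⟩
  exact ⟨i, by rw [← hi, abs_of_nonneg (hi ▸ dist_nonneg)]⟩

theorem ncard_range_edgeLengthPattern_le [Fintype V] [DecidableEq V] :
    (Set.range (edgeLengthPattern (V := V) (d := d))).ncard ≤
      (Fintype.card V * (Fintype.card V - 1) * d + (2 * Fintype.card V + d)).choose
        (2 * Fintype.card V + d) := by
  have h := ncard_range_zeroPattern_le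
    (fun a : {e : Sym2 V // ¬e.IsDiag} × Fin d => edgeLengthPoly a.2 a.1.1) 2
    fun a => totalDegree_edgeLengthPoly_le _ _
  have hσ : Fintype.card ((V × Fin 2) ⊕ Fin d) = 2 * Fintype.card V + d := by
    simp [mul_comm]
  have hα : Fintype.card ({e : Sym2 V // ¬e.IsDiag} × Fin d) * 2 =
      Fintype.card V * (Fintype.card V - 1) * d := by
    rw [Fintype.card_prod, Sym2.card_subtype_not_diag, Fintype.card_fin, mul_right_comm,
      Nat.choose_two_right, Nat.div_mul_cancel (Nat.even_mul_pred_self _).two_dvd]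
  rw [hσ, hα] at h
  exact h

end EdgeLengthEquations

/-- For `n ≥ 3`, `m ≥ 0`, `d ≥ 1`, the number of labelled `n`-vertex
`m`-edge graphs with degenerate distance-number at most `d` is at most
`(e·n·d/2)^(2n+d) · C(ex(n,d), m)`. -/
theorem stmt9 (n m d : ℕ) (hn : 3 ≤ n) (hd : 1 ≤ d) :
    (({G : SimpleGraph (Fin n) | G.edgeSet.ncard = m ∧ G.ddn ≤ d}).ncard : ℝ) ≤
      (Real.exp 1 * n * d / 2) ^ (2 * n + d) * (distEx n d).choose m := by
  set I : Set (Set ({e : Sym2 (Fin n) // ¬e.IsDiag} × Fin d)) :=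
    {P | ∃ f : Fin n → Plane, Function.Injective f ∧
      ∃ t : Fin d → ℝ, edgeLengthPattern (drawingPoint f t) = P}
  have hcount := SimpleGraph.ncard_le_ncard_mul_choose (S := {G | G.edgeSet.ncard = m ∧ G.ddn ≤ d})
    (Set.toFinite I) patternGraph
    (fun G ⟨hm, hG⟩ => by
      obtain ⟨f, hf, t, hle⟩ := exists_le_patternGraph G hG
      exact ⟨hm, _, ⟨f, hf, t, rfl⟩, hle⟩)
    (fun _ ⟨f, hf, t, hP⟩ => hP ▸ SimpleGraph.ncard_edgeSet_le_distEx _ (ddn_patternGraph_le hf t))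
  have hI : I.ncard ≤ (n * (n - 1) * d + (2 * n + d)).choose (2 * n + d) := by
    have h := ncard_range_edgeLengthPattern_le (V := Fin n) (d := d)
    rw [Fintype.card_fin] at h
    refine (Set.ncard_le_ncard ?_ (Set.toFinite _)).trans h
    rintro _ ⟨f, -, t, rfl⟩
    exact ⟨_, rfl⟩
  calc _ ≤ (I.ncard : ℝ) * (distEx n d).choose m := by exact_mod_cast hcount
    _ ≤ _ := mul_le_mul_of_nonneg_right
      ((Nat.cast_le.2 hI).trans (choose_le_exp_mul_pow n d hn hd)) (Nat.cast_nonneg _)
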